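/- Let G be a finite group, Γ a group, and X a G-set. If α : Γ → G is a surjective homomorphism, then the subset {(β, x) ∈ Fix_{Γ,G}(X) : β is conjugate to α} is G-equivariantly bijective to G ×_{Z(G)} X^G, where Z(G) is the center of G; in particular, when G is abelian it is bijective to (conjugates of α) × X^G = {α} × X^G. -/
import Mathlib


variable {Γ G X : Type*} [Group Γ] [Group G] [MulAction G X]

/-- `Fix_{Γ,G}(X) = {(α,x) : α(γ)•x = x for all γ}`. -/
def FixPts (Γ G X : Type*) [Group Γ] [Group G] [MulAction G X] : Type _ :=
  {q : (Γ →* G) × X // ∀ γ : Γ, q.1 γ • q.2 = q.2}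

/-- Conjugation of a homomorphism `α : Γ → G` by `g ∈ G`. -/
def conjHom (g : G) (α : Γ →* G) : Γ →* G :=
  ((MulAut.conj g).toMonoidHom).comp α

/-- The `G`-action on `Fix_{Γ,G}(X)`: `g • (α,x) = (gαg⁻¹, g•x)`. -/
def fixSmul (g : G) (q : FixPts Γ G X) : FixPts Γ G X :=
  ⟨(conjHom g q.1.1, g • q.1.2), by
    intro γ
    simp only [conjHom, MonoidHom.comp_apply, MulEquiv.coe_toMonoidHom, MulAut.conj_apply,
      mul_smul, inv_smul_smul]
    rw [q.2 γ]⟩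

/-- The conjugation equivalence relation on `Hom(Γ,G)`. -/
def conjSetoid (Γ G : Type*) [Group Γ] [Group G] : Setoid (Γ →* G) where
  r α β := ∃ g : G, β = conjHom g α
  iseqv := by
    constructor
    · exact fun α => ⟨1, by ext γ; simp [conjHom]⟩
    · rintro α β ⟨g, rfl⟩
      exact ⟨g⁻¹, by ext γ; simp [conjHom, mul_assoc]⟩
    · rintro α β δ ⟨g, rfl⟩ ⟨g', rfl⟩
      exact ⟨g' * g, by ext γ; simp [conjHom, mul_assoc]⟩

/-- The fixed points `X^{α(Γ)}`. -/
def fixedByHom (α : Γ →* G) (X : Type*) [MulAction G X] : Type _ :=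
  {x : X // ∀ γ : Γ, α γ • x = x}

/-- The action of the centralizer `C_G(α(Γ))` on `X^{α(Γ)}`. -/
def centAct (α : Γ →* G) (k : Subgroup.centralizer (Set.range α)) (x : fixedByHom α X) :
    fixedByHom α X :=
  ⟨(k : G) • x.1, by
    intro γ
    rw [smul_smul, k.2 (α γ) ⟨γ, rfl⟩, ← smul_smul, x.2 γ]⟩

/-- The induced `G`-set `G ×_K Y`: quotient of `G × Y` by `(gk, y) ~ (g, k·y)`. -/
def IndGSet (K : Subgroup G) (Y : Type*) (act : K → Y → Y) : Type _ :=
  Quot (fun a b : G × Y => ∃ k : K, a.1 = b.1 * k ∧ b.2 = act k a.2)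

/-- `G` acts on `G ×_K Y` by left multiplication on the first factor. -/
def indSmul (K : Subgroup G) (Y : Type*) (act : K → Y → Y) (g : G) :
    IndGSet K Y act → IndGSet K Y act :=
  Quot.map (fun a => (g * a.1, a.2)) (by
    rintro a b ⟨k, h1, h2⟩
    exact ⟨k, by simp only []; rw [h1, mul_assoc], h2⟩)

lemma conjHom_mul (g g' : G) (α : Γ →* G) :
    conjHom g (conjHom g' α) = conjHom (g * g') α := by
  ext γ; simp [conjHom, mul_assoc]

/-- The action of the center `Z(G)` on `X^G`. -/
def centerAct (z : Subgroup.center G) (x : {x : X // ∀ g : G, g • x = x}) :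
    {x : X // ∀ g : G, g • x = x} :=
  ⟨(z : G) • x.1, by intro g; rw [x.2 z]; exact x.2 g⟩

/-- The `G`-action on the subset of `Fix_{Γ,G}(X)` of pairs whose first
coordinate is conjugate to `α`. -/
def conjClassSmul (α : Γ →* G) (g : G)
    (p : {p : FixPts Γ G X // ∃ g₀ : G, p.val.1 = conjHom g₀ α}) :
    {p : FixPts Γ G X // ∃ g₀ : G, p.val.1 = conjHom g₀ α} :=
  ⟨fixSmul g p.1, by
    obtain ⟨g₀, h⟩ := p.2
    exact ⟨g * g₀, by simp [fixSmul, h, conjHom_mul]⟩⟩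


section Aux
variable {Γ G X : Type*} [Group Γ] [Group G] [MulAction G X]

lemma conjHom_apply (g : G) (α : Γ →* G) (γ : Γ) :
    conjHom g α γ = g * α γ * g⁻¹ := rfl

lemma mem_center_of_conjHom_eq {α : Γ →* G} (hα : Function.Surjective α)
    {a b : G} (h : conjHom a α = conjHom b α) : b⁻¹ * a ∈ Subgroup.center G := by
  rw [Subgroup.mem_center_iff]
  intro g
  obtain ⟨γ, rfl⟩ := hα g
  have h2 : a * α γ * a⁻¹ = b * α γ * b⁻¹ := by
    have := congrArg (fun f : Γ →* G => f γ) h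
    simpa [conjHom_apply] using this
  have h3 := congrArg (fun t => b⁻¹ * t * a) h2
  simp only [mul_assoc, inv_mul_cancel, mul_one, inv_mul_cancel_left] at h3
  rw [← mul_assoc] at h3
  exact h3.symm

lemma fixed_shift {α : Γ →* G} (hα : Function.Surjective α) {g₀ : G} {x : X}
    (hx : ∀ γ : Γ, conjHom g₀ α γ • x = x) : ∀ g : G, g • (g₀⁻¹ • x) = g₀⁻¹ • x := by
  intro g
  obtain ⟨γ, rfl⟩ := hα g
  have := congrArg (fun y => g₀⁻¹ • y) (hx γ)
  simpa [conjHom_apply, mul_smul] using this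

end Aux

/-- If `α : Γ → G` is surjective then the subset
`{(β,x) ∈ Fix_{Γ,G}(X) : β conjugate to α}` is `G`-equivariantly bijective to
`G ×_{Z(G)} X^G`; in particular when `G` is abelian it is bijective to
`{α} × X^G ≅ X^G`. -/
theorem stmt3 (Γ G X : Type*) [Group Γ] [Group G] [Finite G] [MulAction G X]
    (α : Γ →* G) (hα : Function.Surjective α) :
    (∃ e : {p : FixPts Γ G X // ∃ g₀ : G, p.val.1 = conjHom g₀ α} ≃
        IndGSet (Subgroup.center G) {x : X // ∀ g : G, g • x = x} centerAct,
      ∀ (g : G) (p : _), e (conjClassSmul α g p) = indSmul _ _ _ g (e p)) ∧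
    ((∀ a b : G, a * b = b * a) →
      ∃ e' : {p : FixPts Γ G X // ∃ g₀ : G, p.val.1 = conjHom g₀ α} ≃
          {x : X // ∀ g : G, g • x = x},
        (∀ p : {p : FixPts Γ G X // ∃ g₀ : G, p.val.1 = conjHom g₀ α}, (e' p : X) = p.val.val.2) ∧
        (∀ p : {p : FixPts Γ G X // ∃ g₀ : G, p.val.1 = conjHom g₀ α}, p.val.val.1 = α) ∧
        ∀ (g : G) (p : _), e' (conjClassSmul α g p) = e' p) := by
  classical
  set Y := {x : X // ∀ g : G, g • x = x} with hY
  set S := {p : FixPts Γ G X // ∃ g₀ : G, p.val.1 = conjHom g₀ α} with hS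
  -- the forward map
  have key : ∀ p : S, ∀ g : G,
      g • ((Classical.choose p.2)⁻¹ • p.val.val.2) = (Classical.choose p.2)⁻¹ • p.val.val.2 := by
    intro p g
    refine fixed_shift hα (fun γ => ?_) g
    rw [← Classical.choose_spec p.2]
    exact p.val.2 γ
  let F : S → IndGSet (Subgroup.center G) Y centerAct := fun p =>
    Quot.mk _ (Classical.choose p.2, ⟨(Classical.choose p.2)⁻¹ • p.val.val.2, key p⟩)
  -- the inverse map
  let Fi : IndGSet (Subgroup.center G) Y centerAct → S :=
    Quot.lift (fun a => (⟨⟨(conjHom a.1 α, a.1 • a.2.1), by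
        intro γ
        rw [conjHom_apply, mul_smul, mul_smul, inv_smul_smul, a.2.2 (α γ)]⟩,
      ⟨a.1, rfl⟩⟩ : S)) (by
      rintro ⟨g, y⟩ ⟨g', y'⟩ ⟨k, h1, h2⟩
      have h1' : g = g' * (k : G) := h1
      have h2' : y' = centerAct k y := h2
      refine Subtype.ext (Subtype.ext (Prod.ext ?_ ?_))
      · ext γ
        have hk := (Subgroup.mem_center_iff.mp k.2) (α γ)
        show g * α γ * g⁻¹ = g' * α γ * g'⁻¹
        have hkk : (k : G) * α γ * (k : G)⁻¹ = α γ := by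
          rw [← hk, mul_assoc, mul_inv_cancel, mul_one]
        calc g * α γ * g⁻¹ = g' * ((k : G) * α γ * (k : G)⁻¹) * g'⁻¹ := by
              rw [h1']; group
          _ = g' * α γ * g'⁻¹ := by rw [hkk]
      · show g • y.1 = g' • y'.1
        rw [h2']
        show g • y.1 = g' • ((k : G) • y.1)
        rw [h1', mul_smul])
  -- F is independent of the choice of conjugator
  have Fchar : ∀ (p : S) (g₀ : G), p.val.val.1 = conjHom g₀ α →
      ∀ hy : ∀ gg : G, gg • (g₀⁻¹ • p.val.val.2) = g₀⁻¹ • p.val.val.2,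
      F p = Quot.mk _ (g₀, ⟨g₀⁻¹ • p.val.val.2, hy⟩) := by
    intro p g₀ h hy
    have hcs : p.val.val.1 = conjHom (Classical.choose p.2) α := Classical.choose_spec p.2
    have hz : g₀⁻¹ * Classical.choose p.2 ∈ Subgroup.center G :=
      mem_center_of_conjHom_eq hα (by rw [← hcs, h])
    refine Quot.sound ⟨⟨g₀⁻¹ * Classical.choose p.2, hz⟩, ?_, Subtype.ext ?_⟩
    · show Classical.choose p.2 = g₀ * (g₀⁻¹ * Classical.choose p.2)
      rw [mul_inv_cancel_left]
    · show g₀⁻¹ • p.val.val.2 =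
        (g₀⁻¹ * Classical.choose p.2) • ((Classical.choose p.2)⁻¹ • p.val.val.2)
      rw [smul_smul, mul_assoc, mul_inv_cancel, mul_one]
  have hFiF : ∀ p : S, Fi (F p) = p := by
    intro p
    have h1 : Fi (F p) = ⟨⟨(conjHom (Classical.choose p.2) α,
        (Classical.choose p.2) • ((Classical.choose p.2)⁻¹ • p.val.val.2)),
        by intro γ; rw [conjHom_apply, mul_smul, mul_smul, inv_smul_smul, key p (α γ)]⟩,
        ⟨Classical.choose p.2, rfl⟩⟩ := rfl
    rw [h1]
    refine Subtype.ext (Subtype.ext ?_)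
    show (conjHom (Classical.choose p.2) α,
      (Classical.choose p.2) • ((Classical.choose p.2)⁻¹ • p.val.val.2)) = p.val.val
    rw [smul_inv_smul, ← Classical.choose_spec p.2]
  have hFFi : ∀ q, F (Fi q) = q := by
    refine Quot.ind ?_
    rintro ⟨g, y⟩
    have hfst : (Fi (Quot.mk _ (g, y))).val.val.1 = conjHom g α := by
      dsimp only [Fi]
    have hy : ∀ gg : G, gg • (g⁻¹ • (Fi (Quot.mk _ (g, y))).val.val.2)
        = g⁻¹ • (Fi (Quot.mk _ (g, y))).val.val.2 := by
      intro gg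
      dsimp only [Fi]
      rw [inv_smul_smul, y.2 gg]
    rw [Fchar _ g hfst hy]
    congr 1
    refine Prod.ext rfl (Subtype.ext ?_)
    dsimp only [Fi]
    rw [inv_smul_smul]
  have hequiv : ∀ (g : G) (p : S), F (conjClassSmul α g p) = indSmul _ _ _ g (F p) := by
    intro g p
    have e2 : (conjClassSmul α g p).val.val.2 = g • p.val.val.2 := rfl
    have hfst : (conjClassSmul α g p).val.val.1 = conjHom (g * Classical.choose p.2) α := by
      show conjHom g p.val.val.1 = _
      conv_lhs => rw [Classical.choose_spec p.2]
      rw [conjHom_mul]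
    have hy : ∀ gg : G, gg • ((g * Classical.choose p.2)⁻¹ • (conjClassSmul α g p).val.val.2)
        = (g * Classical.choose p.2)⁻¹ • (conjClassSmul α g p).val.val.2 := by
      intro gg
      rw [e2]
      simp only [mul_inv_rev, mul_smul, inv_smul_smul]
      exact key p gg
    rw [Fchar _ _ hfst hy]
    have h2 : indSmul (Subgroup.center G) Y centerAct g (F p)
        = Quot.mk _ (g * Classical.choose p.2,
          ⟨(Classical.choose p.2)⁻¹ • p.val.val.2, key p⟩) := by
      dsimp only [F, indSmul]
      rfl
    rw [h2]
    congr 1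
    refine Prod.ext rfl (Subtype.ext ?_)
    show (g * Classical.choose p.2)⁻¹ • (conjClassSmul α g p).val.val.2
      = (Classical.choose p.2)⁻¹ • p.val.val.2
    rw [e2]
    simp only [mul_inv_rev, mul_smul, inv_smul_smul]
  refine ⟨⟨⟨F, Fi, hFiF, hFFi⟩, hequiv⟩, ?_⟩
  -- abelian case
  intro hab
  have hconj : ∀ g : G, conjHom g α = α := by
    intro g
    ext γ
    rw [conjHom_apply, hab g (α γ), mul_assoc, mul_inv_cancel, mul_one]
  have hfst : ∀ p : S, p.val.val.1 = α := by
    intro p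
    obtain ⟨g₀, h⟩ := p.2
    rw [h, hconj]
  have hfix : ∀ (p : S) (g : G), g • p.val.val.2 = p.val.val.2 := by
    intro p g
    obtain ⟨γ, rfl⟩ := hα g
    have := p.val.2 γ
    rwa [hfst p] at this
  refine ⟨⟨fun p => ⟨p.val.val.2, hfix p⟩,
    fun x => ⟨⟨(α, x.1), fun γ => x.2 (α γ)⟩, ⟨1, (hconj 1).symm⟩⟩, ?_, ?_⟩, ?_, hfst, ?_⟩
  · intro p
    exact Subtype.ext (Subtype.ext (Prod.ext (hfst p).symm rfl))
  · intro x
    rfl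
  · intro p
    rfl
  · intro g p
    refine Subtype.ext ?_
    show g • p.val.val.2 = p.val.val.2
    exact hfix p g
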